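/- Let k_1,…,k_N > 0 and α_1,…,α_N ∈ ℕ_{>0}. For any M > 0 there exists a unique strictly positive vector (a_{1,∞},…,a_{N,∞}) ∈ ℝ^N_{>0} satisfying k_1 a_{1,∞}^{α_1} = k_2 a_{2,∞}^{α_2} = … = k_N a_{N,∞}^{α_N} together with a_{1,∞}/α_1 + a_{2,∞}/α_2 + … + a_{N,∞}/α_N = M. -/

import Mathlib

/- STATEMENT 7: For the cyclic network α_1 A_1 → … → α_N A_N → α_1 A_1 with rates k_i > 0
and any M > 0, there is a unique strictly positive vector a∞ with
k_1 a_{1,∞}^{α_1} = … = k_N a_{N,∞}^{α_N} and ∑_i a_{i,∞}/α_i = M. -/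

namespace Stmt7

open Real Finset

/-- All the values `k i * a i ^ α i` agree if consecutive ones do. -/
lemma chain_eq {N : ℕ} [NeZero N] (k : Fin N → ℝ) (α : Fin N → ℕ) (a : Fin N → ℝ)
    (h : ∀ i : Fin N, k i * a i ^ α i = k (i + 1) * a (i + 1) ^ α (i + 1)) :
    ∀ i : Fin N, k i * a i ^ α i = k 0 * a 0 ^ α 0 := by
  have key : ∀ n : ℕ, ∀ hn : n < N, k ⟨n, hn⟩ * a ⟨n, hn⟩ ^ α ⟨n, hn⟩
      = k 0 * a 0 ^ α 0 := by
    intro n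
    induction n with
    | zero =>
      intro hn
      have : (⟨0, hn⟩ : Fin N) = 0 := by
        apply Fin.ext; simp
      rw [this]
    | succ m ih =>
      intro hn
      have hm : m < N := Nat.lt_of_succ_lt hn
      have hstep := h ⟨m, hm⟩
      have heq : (⟨m, hm⟩ : Fin N) + 1 = ⟨m + 1, hn⟩ := by
        apply Fin.ext
        have hN2 : 2 ≤ N := by omega
        simp [Fin.add_def, Fin.val_one', Nat.mod_eq_of_lt (show 1 < N by omega),
          Nat.mod_eq_of_lt hn]
      rw [heq] at hstep
      rw [← hstep]
      exact ih hm
  intro i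
  have : i = ⟨i.val, i.isLt⟩ := rfl
  rw [this]
  exact key i.val i.isLt

/-- From positivity and `k i * a i ^ α i = c` we recover `a i` as an rpow. -/
lemma recover {k : ℝ} (hk : 0 < k) {α : ℕ} (hα : 0 < α) {x c : ℝ} (hx : 0 < x)
    (h : k * x ^ α = c) : x = (c / k) ^ ((α : ℝ)⁻¹) := by
  have hαR : (α : ℝ) ≠ 0 := Nat.cast_ne_zero.mpr hα.ne'
  have h1 : c / k = x ^ (α : ℝ) := by
    rw [← h, mul_comm, mul_div_assoc, div_self hk.ne', mul_one, Real.rpow_natCast]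
  rw [h1, ← Real.rpow_mul hx.le, mul_inv_cancel₀ hαR, Real.rpow_one]

theorem cyclic_equilibrium_exists_unique {N : ℕ} [NeZero N]
    (k : Fin N → ℝ) (hk : ∀ i, 0 < k i)
    (α : Fin N → ℕ) (hα : ∀ i, 0 < α i)
    (M : ℝ) (hM : 0 < M) :
    ∃! a : Fin N → ℝ,
      (∀ i, 0 < a i) ∧
      (∀ i : Fin N, k i * a i ^ α i = k (i + 1) * a (i + 1) ^ α (i + 1)) ∧
      ∑ i, a i / (α i : ℝ) = M := by
  have hαR : ∀ i, (0 : ℝ) < (α i : ℝ) := fun i => Nat.cast_pos.mpr (hα i)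
  set g : ℝ → Fin N → ℝ := fun c i => (c / k i) ^ ((α i : ℝ)⁻¹) with hg
  set F : ℝ → ℝ := fun c => ∑ i, g c i / (α i : ℝ) with hF
  -- basic facts about g
  have hgpos : ∀ c, 0 < c → ∀ i, 0 < g c i := fun c hc i =>
    Real.rpow_pos_of_pos (div_pos hc (hk i)) _
  have hgeq : ∀ c, 0 < c → ∀ i, k i * g c i ^ α i = c := by
    intro c hc i
    have hb : (0:ℝ) ≤ c / k i := (div_pos hc (hk i)).le
    rw [hg]
    simp only
    rw [← Real.rpow_natCast (((c / k i) ^ ((α i : ℝ)⁻¹))) (α i),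
      ← Real.rpow_mul hb, inv_mul_cancel₀ (hαR i).ne', Real.rpow_one,
      mul_div_cancel₀ _ (hk i).ne']
  -- F strictly monotone on nonnegatives
  have hFmono : ∀ c c' : ℝ, 0 ≤ c → c < c' → F c < F c' := by
    intro c c' hc hcc
    apply Finset.sum_lt_sum_of_nonempty Finset.univ_nonempty
    intro i _
    have h1 : (c / k i) ^ ((α i : ℝ)⁻¹) < (c' / k i) ^ ((α i : ℝ)⁻¹) :=
      Real.rpow_lt_rpow (div_nonneg hc (hk i).le)
        ((div_lt_div_iff_of_pos_right (hk i)).mpr hcc) (inv_pos.mpr (hαR i))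
    exact (div_lt_div_iff_of_pos_right (hαR i)).mpr h1
  -- F is continuous
  have hFcont : Continuous F := by
    apply continuous_finset_sum
    intro i _
    apply Continuous.div_const
    exact (Real.continuous_rpow_const (by positivity)).comp (continuous_id.div_const _)
  -- F 0 = 0
  have hF0 : F 0 = 0 := by
    rw [hF]
    simp only
    apply Finset.sum_eq_zero
    intro i _
    rw [hg]
    simp [Real.zero_rpow (inv_ne_zero (hαR i).ne')]
  -- choose c₀ with F c₀ ≥ M
  set c₀ : ℝ := k 0 * (M * α 0) ^ (α 0) with hc₀def
  have hc₀pos : 0 < c₀ := mul_pos (hk 0) (pow_pos (mul_pos hM (hαR 0)) _)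
  have hterm0 : g c₀ 0 / (α 0 : ℝ) = M := by
    have : g c₀ 0 = M * (α 0 : ℝ) := by
      have h1 : c₀ / k 0 = (M * (α 0:ℝ)) ^ ((α 0 : ℕ)) := by
        rw [hc₀def, mul_comm, mul_div_assoc, div_self (hk 0).ne', mul_one]
      rw [hg]
      simp only
      rw [h1, ← Real.rpow_natCast (M * (α 0:ℝ)) (α 0), ← Real.rpow_mul (by positivity),
        mul_inv_cancel₀ (hαR 0).ne', Real.rpow_one]
    rw [this, mul_div_assoc, div_self (hαR 0).ne', mul_one]
  have hFc₀ : M ≤ F c₀ := by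
    rw [← hterm0, hF]
    exact Finset.single_le_sum
      (f := fun i => g c₀ i / (α i : ℝ))
      (fun i _ => div_nonneg (hgpos c₀ hc₀pos i).le (hαR i).le)
      (Finset.mem_univ 0)
  -- intermediate value theorem
  obtain ⟨c, hcmem, hcM⟩ : ∃ c ∈ Set.Icc (0:ℝ) c₀, F c = M := by
    have := intermediate_value_Icc hc₀pos.le hFcont.continuousOn
    have hMmem : M ∈ Set.Icc (F 0) (F c₀) := ⟨by rw [hF0]; exact hM.le, hFc₀⟩
    obtain ⟨c, hc, hc'⟩ := this hMmem
    exact ⟨c, hc, hc'⟩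
  have hcpos : 0 < c := by
    rcases hcmem.1.lt_or_eq with h | h
    · exact h
    · exfalso; rw [← h, hF0] at hcM; exact hM.ne hcM
  -- existence witness
  refine ⟨g c, ⟨hgpos c hcpos, ?_, hcM⟩, ?_⟩
  · intro i
    rw [hgeq c hcpos i, hgeq c hcpos (i + 1)]
  · rintro b ⟨hbpos, hbchain, hbsum⟩
    set c' : ℝ := k 0 * b 0 ^ α 0 with hc'def
    have hc'pos : 0 < c' := mul_pos (hk 0) (pow_pos (hbpos 0) _)
    have hball : ∀ i, b i = g c' i := by
      intro i
      have h1 : k i * b i ^ α i = c' := chain_eq k α b hbchain i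
      exact recover (hk i) (hα i) (hbpos i) h1
    have hFc' : F c' = M := by
      rw [hF, ← hbsum]
      exact Finset.sum_congr rfl fun i _ => by rw [hball i]
    have hcc' : c' = c := by
      rcases lt_trichotomy c' c with h | h | h
      · exact absurd (hFmono c' c hc'pos.le h) (by rw [hFc', hcM]; exact lt_irrefl M)
      · exact h
      · exact absurd (hFmono c c' hcpos.le h) (by rw [hFc', hcM]; exact lt_irrefl M)
    funext i
    rw [hball i, hcc']

end Stmt7
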